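/- arXiv:2305.12438 — 3 statements merged into one kernel-verified Lean document; each statement's English description precedes it below -/
import Mathlib

section
/- The integral (1/π) · ∫₀^{π/2} cos(t) · log(cot²(t/2)) dt equals 1. -/
/-!
The integrand has the explicit antiderivative `F t = sin t * log (cot (t / 2) ^ 2) + 2 * t`: since
`log (cot (t / 2) ^ 2)` has derivative `-2 / sin t`, the product rule leaves exactly the integrand.
Writing `sin t = 2 sin (t / 2) cos (t / 2)` turns `F` into a combination of `x log x` terms, so `F` is
continuous at `0` despite the logarithmic singularity. The integrand is nonnegative on `(0, π / 2)`,
which makes it integrable, and the integral is `F (π / 2) - F 0 = π`.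
-/

open Real Set

theorem intervalIntegral.integral_eq_sub_of_hasDerivAt_of_nonneg {f f' : ℝ → ℝ} {a b : ℝ}
    (hab : a ≤ b) (hcont : ContinuousOn f (Icc a b))
    (hderiv : ∀ x ∈ Ioo a b, HasDerivAt f (f' x) x) (hpos : ∀ x ∈ Ioo a b, 0 ≤ f' x) :
    ∫ x in a..b, f' x = f b - f a := by
  refine integral_eq_sub_of_hasDerivAt_of_le hab hcont hderiv ?_
  apply intervalIntegrable_deriv_of_nonneg (g := f) <;>
    simpa only [uIcc_of_le hab, min_eq_left hab, max_eq_right hab]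

theorem Real.log_eq_zero_of_sq_eq_one {c : ℝ} (h : c ^ 2 = 1) : log c = 0 :=
  log_eq_zero.2 (Or.inr (sq_eq_one_iff.1 h))

/-- Valid for every `x`: where `sin x` or `cos x` vanishes, `cot x = 0` (by `x / 0 = 0`) and the other
function is `±1`, so both sides are `0`. -/
theorem Real.log_cot_sq (x : ℝ) : log (cot x ^ 2) = 2 * log (cos x) - 2 * log (sin x) := by
  rw [log_pow, cot_eq_cos_div_sin]
  rcases eq_or_ne (sin x) 0 with hs | hs
  · simp [hs, log_eq_zero_of_sq_eq_one (by nlinarith [sin_sq_add_cos_sq x] : cos x ^ 2 = 1)]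
  rcases eq_or_ne (cos x) 0 with hc | hc
  · simp [hc, log_eq_zero_of_sq_eq_one (by nlinarith [sin_sq_add_cos_sq x] : sin x ^ 2 = 1)]
  rw [log_div hc hs]
  push_cast
  ring

theorem Real.sin_eq_two_mul_sin_half_mul_cos_half (x : ℝ) :
    sin x = 2 * sin (x / 2) * cos (x / 2) := by
  rw [← sin_two_mul, mul_div_cancel₀ x two_ne_zero]

theorem Real.hasDerivAt_log_cot_sq_half {t : ℝ} (ht : sin t ≠ 0) :
    HasDerivAt (fun t => log (cot (t / 2) ^ 2)) (-2 / sin t) t := by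
  rw [sin_eq_two_mul_sin_half_mul_cos_half] at ht ⊢
  have hs : sin (t / 2) ≠ 0 := by contrapose! ht; simp [ht]
  have hc : cos (t / 2) ≠ 0 := by contrapose! ht; simp [ht]
  have hhalf : HasDerivAt (fun t : ℝ => t / 2) (1 / 2) t := (hasDerivAt_id t).div_const 2
  have hlogc := (((hasDerivAt_cos _).comp t hhalf).log hc).const_mul 2
  have hlogs := (((hasDerivAt_sin _).comp t hhalf).log hs).const_mul 2
  simp only [log_cot_sq]
  refine (hlogc.sub hlogs).congr_deriv ?_
  simp only [Function.comp_apply]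
  field_simp
  linear_combination -sin_sq_add_cos_sq (t / 2)

noncomputable def energyAntideriv (t : ℝ) : ℝ := sin t * log (cot (t / 2) ^ 2) + 2 * t

theorem energyAntideriv_eq_mul_log_add (t : ℝ) :
    energyAntideriv t = 4 * sin (t / 2) * (cos (t / 2) * log (cos (t / 2)))
      - 4 * cos (t / 2) * (sin (t / 2) * log (sin (t / 2))) + 2 * t := by
  rw [energyAntideriv, log_cot_sq, sin_eq_two_mul_sin_half_mul_cos_half]
  ring

theorem continuous_energyAntideriv : Continuous energyAntideriv := by
  simp only [funext energyAntideriv_eq_mul_log_add]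
  have := continuous_mul_log
  fun_prop

theorem hasDerivAt_energyAntideriv {t : ℝ} (ht : sin t ≠ 0) :
    HasDerivAt energyAntideriv (cos t * log (cot (t / 2) ^ 2)) t := by
  refine (((hasDerivAt_sin t).mul (hasDerivAt_log_cot_sq_half ht)).add
    ((hasDerivAt_id t).const_mul 2)).congr_deriv ?_
  field_simp
  ring

theorem energyAntideriv_zero : energyAntideriv 0 = 0 := by simp [energyAntideriv]

theorem energyAntideriv_pi_div_two : energyAntideriv (π / 2) = π := by
  rw [energyAntideriv, sin_pi_div_two, show π / 2 / 2 = π / 4 by ring, cot_eq_cos_div_sin,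
    cos_pi_div_four, sin_pi_div_four, div_self (by positivity), one_pow, log_one]
  ring

theorem Real.log_cot_sq_nonneg {x : ℝ} (h0 : 0 < x) (h1 : x ≤ π / 4) : 0 ≤ log (cot x ^ 2) := by
  have hsin : 0 < sin x := sin_pos_of_pos_of_lt_pi h0 (by linarith [pi_pos])
  have hle : sin x ≤ cos x := by
    rw [← sin_pi_div_two_sub]
    exact sin_le_sin_of_le_of_le_pi_div_two (by linarith) (by linarith) (by linarith)
  rw [log_cot_sq]
  linarith [log_le_log hsin hle]

theorem energy_integral_eval :
    (1 / π) * ∫ t in (0 : ℝ)..(π / 2), Real.cos t * Real.log ((Real.cot (t / 2)) ^ 2) = 1 := by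
  have hintegral : ∫ t in (0 : ℝ)..(π / 2), cos t * log (cot (t / 2) ^ 2) = π := by
    rw [intervalIntegral.integral_eq_sub_of_hasDerivAt_of_nonneg (by positivity)
      continuous_energyAntideriv.continuousOn (fun t ht => hasDerivAt_energyAntideriv ?_)
      (fun t ht => ?_), energyAntideriv_pi_div_two, energyAntideriv_zero, sub_zero]
    · exact (sin_pos_of_pos_of_lt_pi ht.1 (by linarith [pi_pos, ht.2])).ne'
    · exact mul_nonneg (cos_nonneg_of_mem_Icc ⟨by linarith [pi_pos, ht.1], ht.2.le⟩)
        (log_cot_sq_nonneg (by linarith [ht.1]) (by linarith [ht.2]))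
  rw [hintegral, one_div_mul_cancel pi_ne_zero]
end

section
/- Define θ : [0, 2π] → [0, 2π] by θ(t) = t² for t ∈ [0,1] and θ(t) = t for t ∈ [1, 2π], and let g₀(e^{it}) = e^{iθ(t)}. Then g₀ is not quasi-Möbius: for every increasing function η : [0,∞] → [0,∞] with η(0) = 0, there exists a quadruple of distinct points a,b,c,d on S¹ with [g₀(a),g₀(b),g₀(c),g₀(d)] > η([a,b,c,d]). -/
open Complex Real

noncomputable def crossRatio (a b c d : ℂ) : ℝ :=
  (‖a - b‖ * ‖c - d‖) / (‖a - c‖ * ‖b - d‖)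

noncomputable def θpiece (t : ℝ) : ℝ := if t ≤ 1 then t ^ 2 else t

lemma chord (s t : ℝ) :
    ‖Complex.exp (Complex.I * s) - Complex.exp (Complex.I * t)‖
      = 2 * |Real.sin ((s - t) / 2)| := by
  have hs : Complex.I * (s : ℂ)
      = (((s : ℂ) + t) / 2) * Complex.I + (((s : ℂ) - t) / 2) * Complex.I := by ring
  have ht : Complex.I * (t : ℂ)
      = (((s : ℂ) + t) / 2) * Complex.I + (-(((s : ℂ) - t) / 2)) * Complex.I := by ring
  rw [hs, ht, Complex.exp_add, Complex.exp_add]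
  rw [show Complex.exp ((((s:ℂ)+t)/2) * Complex.I) * Complex.exp ((((s:ℂ)-t)/2) * Complex.I)
        - Complex.exp ((((s:ℂ)+t)/2) * Complex.I) * Complex.exp ((-(((s:ℂ)-t)/2)) * Complex.I)
      = Complex.exp ((((s:ℂ)+t)/2) * Complex.I) *
        (Complex.exp ((((s:ℂ)-t)/2) * Complex.I)
          - Complex.exp ((-(((s:ℂ)-t)/2)) * Complex.I)) from by ring]
  have h1 : (((((s:ℂ)+t)/2)) * Complex.I).re = 0 := by simp
  have h2 : (((s:ℂ)-t)/2) = (((s-t)/2 : ℝ) : ℂ) := by push_cast; ring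
  rw [norm_mul, Complex.norm_exp, h1, Real.exp_zero, one_mul]
  rw [Complex.exp_mul_I, Complex.exp_mul_I, Complex.sin_neg, Complex.cos_neg]
  rw [show Complex.cos (((s:ℂ)-t)/2) + Complex.sin (((s:ℂ)-t)/2) * Complex.I
        - (Complex.cos (((s:ℂ)-t)/2) + -Complex.sin (((s:ℂ)-t)/2) * Complex.I)
      = (2 * Complex.sin (((s:ℂ)-t)/2)) * Complex.I from by ring]
  rw [norm_mul, norm_mul, Complex.norm_I, Complex.norm_two, mul_one, h2, ← Complex.ofReal_sin,
    Complex.norm_real, Real.norm_eq_abs]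

set_option maxHeartbeats 1600000 in
theorem not_quasiMobius :
    ∀ η : ℝ → ℝ, Monotone η → η 0 = 0 →
      ∃ t₁ t₂ t₃ t₄ : ℝ,
        t₁ ∈ Set.Ico 0 (2 * π) ∧ t₂ ∈ Set.Ico 0 (2 * π) ∧
        t₃ ∈ Set.Ico 0 (2 * π) ∧ t₄ ∈ Set.Ico 0 (2 * π) ∧
        t₁ ≠ t₂ ∧ t₁ ≠ t₃ ∧ t₁ ≠ t₄ ∧ t₂ ≠ t₃ ∧ t₂ ≠ t₄ ∧ t₃ ≠ t₄ ∧
        crossRatio (Complex.exp (Complex.I * θpiece t₁)) (Complex.exp (Complex.I * θpiece t₂))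
            (Complex.exp (Complex.I * θpiece t₃)) (Complex.exp (Complex.I * θpiece t₄))
          > η (crossRatio (Complex.exp (Complex.I * t₁)) (Complex.exp (Complex.I * t₂))
              (Complex.exp (Complex.I * t₃)) (Complex.exp (Complex.I * t₄))) := by
  intro η hη hη0
  have hπ3 : (3:ℝ) < π := Real.pi_gt_three
  have hπ4 : π < 4 := Real.pi_lt_four
  have hπ0 : (0:ℝ) < π := by linarith
  obtain ⟨M, hM8, hM0⟩ : ∃ M : ℝ, η 8 ≤ M ∧ 0 ≤ M :=
    ⟨max (η 8) 0, le_max_left _ _, le_max_right _ _⟩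
  obtain ⟨ε, hεhalf, hεM, hε0⟩ :
      ∃ ε : ℝ, ε ≤ 1/2 ∧ ε * (25*(M+1)) ≤ 1 ∧ 0 < ε := by
    refine ⟨min (1/2) (1/(25*(M+1))), min_le_left _ _, ?_, lt_min (by norm_num) (by positivity)⟩
    rw [← le_div_iff₀ (by positivity : (0:ℝ) < 25*(M+1))]
    exact min_le_right _ _
  refine ⟨ε, 2*π - ε, 2*ε, π, ⟨hε0.le, by linarith⟩, ⟨by linarith, by linarith⟩,
    ⟨by linarith, by linarith⟩, ⟨by linarith, by linarith⟩,
    ne_of_lt (by linarith), ne_of_lt (by linarith), ne_of_lt (by linarith),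
    ne_of_gt (by linarith), ne_of_gt (by linarith), ne_of_lt (by linarith), ?_⟩
  have hθ1 : θpiece ε = ε^2 := by unfold θpiece; rw [if_pos (by linarith : ε ≤ 1)]
  have hθ2 : θpiece (2*π - ε) = 2*π - ε := by
    unfold θpiece; rw [if_neg (by push_neg; linarith)]
  have hθ3 : θpiece (2*ε) = (2*ε)^2 := by unfold θpiece; rw [if_pos (by linarith : 2*ε ≤ 1)]
  have hθ4 : θpiece π = π := by unfold θpiece; rw [if_neg (by push_neg; linarith)]
  rw [hθ1, hθ2, hθ3, hθ4]
  unfold crossRatio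
  simp only [chord]
  -- pre-image bounds
  have hA1 : |Real.sin ((ε - (2*π - ε))/2)| ≤ ε := by
    have h1 : (ε - (2*π - ε))/2 = ε - π := by ring
    have h2 : Real.sin (ε - π) = -Real.sin ε := by rw [Real.sin_sub]; simp
    rw [h1, h2, abs_neg,
      _root_.abs_of_nonneg (Real.sin_nonneg_of_nonneg_of_le_pi hε0.le (by linarith))]
    exact Real.sin_le hε0.le
  have hA2 : |Real.sin ((2*ε - π)/2)| ≤ 1 := abs_le.mpr ⟨Real.neg_one_le_sin _, Real.sin_le_one _⟩
  have hA3 : ε/4 ≤ |Real.sin ((ε - 2*ε)/2)| := by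
    have h1 : (ε - 2*ε)/2 = -(ε/2) := by ring
    rw [h1, Real.sin_neg, abs_neg,
      _root_.abs_of_nonneg (Real.sin_nonneg_of_nonneg_of_le_pi (by linarith) (by linarith))]
    have h2 : 2/π * (ε/2) ≤ Real.sin (ε/2) := Real.mul_le_sin (by linarith) (by linarith)
    have h3 : 2/π * (ε/2) = ε * (1/π) := by ring
    have h4 : (1:ℝ)/4 ≤ 1/π := by rw [div_le_div_iff₀ (by norm_num) hπ0]; linarith
    have h5 : ε * (1/4) ≤ ε * (1/π) := mul_le_mul_of_nonneg_left h4 hε0.le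
    nlinarith
  have hA4 : 1/2 ≤ |Real.sin ((2*π - ε - π)/2)| := by
    have h1 : (2*π - ε - π)/2 = (π - ε)/2 := by ring
    rw [h1, _root_.abs_of_nonneg
      (Real.sin_nonneg_of_nonneg_of_le_pi (by linarith) (by linarith))]
    have h2 : 2/π * ((π - ε)/2) ≤ Real.sin ((π - ε)/2) :=
      Real.mul_le_sin (by linarith) (by linarith)
    have h3 : 2/π * ((π - ε)/2) = (π - ε) * (1/π) := by ring
    have h4 : (1:ℝ)/2 ≤ (π - ε) * (1/π) := by
      rw [mul_one_div, le_div_iff₀ hπ0]; linarith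
    linarith
  -- image bounds
  have hB1 : ε/4 ≤ |Real.sin ((ε^2 - (2*π - ε))/2)| := by
    have h1 : (ε^2 - (2*π - ε))/2 = (ε^2 + ε)/2 - π := by ring
    have h2 : Real.sin ((ε^2 + ε)/2 - π) = -Real.sin ((ε^2 + ε)/2) := by
      rw [Real.sin_sub]; simp
    rw [h1, h2, abs_neg,
      _root_.abs_of_nonneg (Real.sin_nonneg_of_nonneg_of_le_pi (by nlinarith) (by nlinarith))]
    have h3 : 2/π * ((ε^2 + ε)/2) ≤ Real.sin ((ε^2 + ε)/2) :=
      Real.mul_le_sin (by nlinarith) (by nlinarith)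
    have h4 : (1:ℝ)/4 ≤ 1/π := by rw [div_le_div_iff₀ (by norm_num) hπ0]; linarith
    have h5 : (ε^2 + ε) * (1/4) ≤ (ε^2 + ε) * (1/π) :=
      mul_le_mul_of_nonneg_left h4 (by positivity)
    have heq : 2/π * ((ε^2 + ε)/2) = (ε^2 + ε) * (1/π) := by ring
    rw [heq] at h3
    nlinarith [sq_nonneg ε]
  have hB2 : 1/2 ≤ |Real.sin (((2*ε)^2 - π)/2)| := by
    have h1 : ((2*ε)^2 - π)/2 = -((π - 4*ε^2)/2) := by ring
    have hsq : 4*ε^2 ≤ 1 := by nlinarith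
    rw [h1, Real.sin_neg, abs_neg,
      _root_.abs_of_nonneg (Real.sin_nonneg_of_nonneg_of_le_pi (by linarith)
        (by nlinarith [sq_nonneg ε]))]
    have h2 : 2/π * ((π - 4*ε^2)/2) ≤ Real.sin ((π - 4*ε^2)/2) :=
      Real.mul_le_sin (by linarith) (by nlinarith [sq_nonneg ε])
    have h4 : (1:ℝ)/2 ≤ (π - 4*ε^2) * (1/π) := by
      rw [mul_one_div, le_div_iff₀ hπ0]; linarith
    have h3 : 2/π * ((π - 4*ε^2)/2) = (π - 4*ε^2) * (1/π) := by ring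
    linarith
  have hB3u : |Real.sin ((ε^2 - (2*ε)^2)/2)| ≤ 3*ε^2/2 := by
    have h1 : (ε^2 - (2*ε)^2)/2 = -(3*ε^2/2) := by ring
    rw [h1, Real.sin_neg, abs_neg,
      _root_.abs_of_nonneg (Real.sin_nonneg_of_nonneg_of_le_pi (by positivity) (by nlinarith))]
    exact Real.sin_le (by positivity)
  have hB3l : 0 < |Real.sin ((ε^2 - (2*ε)^2)/2)| := by
    have h1 : (ε^2 - (2*ε)^2)/2 = -(3*ε^2/2) := by ring
    rw [h1, Real.sin_neg, abs_neg, _root_.abs_of_nonneg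
      (Real.sin_nonneg_of_nonneg_of_le_pi (by positivity) (by nlinarith))]
    exact Real.sin_pos_of_pos_of_lt_pi (by positivity) (by nlinarith)
  have hB4 : |Real.sin ((2*π - ε - π)/2)| ≤ 1 :=
    abs_le.mpr ⟨Real.neg_one_le_sin _, Real.sin_le_one _⟩
  -- positivity of |sin| factors
  have h3p : 0 < |Real.sin ((ε - 2*ε)/2)| := lt_of_lt_of_le (by positivity) hA3
  have h4p : 0 < |Real.sin ((2*π - ε - π)/2)| := lt_of_lt_of_le (by norm_num) hA4
  have hdpre : 0 < 2 * |Real.sin ((ε - 2*ε)/2)| * (2 * |Real.sin ((2*π - ε - π)/2)|) :=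
    mul_pos (mul_pos two_pos h3p) (mul_pos two_pos h4p)
  have hpre_le : 2 * |Real.sin ((ε - (2*π - ε))/2)| * (2 * |Real.sin ((2*ε - π)/2)|) /
      (2 * |Real.sin ((ε - 2*ε)/2)| * (2 * |Real.sin ((2*π - ε - π)/2)|)) ≤ 8 := by
    rw [div_le_iff₀ hdpre]
    nlinarith [mul_le_mul hA1 hA2 (abs_nonneg (Real.sin ((2*ε - π)/2))) hε0.le,
      mul_le_mul hA3 hA4 (by norm_num : (0:ℝ) ≤ 1/2) (abs_nonneg (Real.sin ((ε - 2*ε)/2)))]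
  have hdpost : 0 < 2 * |Real.sin ((ε^2 - (2*ε)^2)/2)| * (2 * |Real.sin ((2*π - ε - π)/2)|) :=
    mul_pos (mul_pos two_pos hB3l) (mul_pos two_pos h4p)
  have hpost : M < 2 * |Real.sin ((ε^2 - (2*π - ε))/2)| * (2 * |Real.sin (((2*ε)^2 - π)/2)|) /
      (2 * |Real.sin ((ε^2 - (2*ε)^2)/2)| * (2 * |Real.sin ((2*π - ε - π)/2)|)) := by
    rw [lt_div_iff₀ hdpost]
    have hnum : ε/2 ≤ 2 * |Real.sin ((ε^2 - (2*π - ε))/2)| *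
        (2 * |Real.sin (((2*ε)^2 - π)/2)|) := by
      nlinarith [mul_le_mul hB1 hB2 (by norm_num : (0:ℝ) ≤ 1/2)
        (abs_nonneg (Real.sin ((ε^2 - (2*π - ε))/2)))]
    have hden : 2 * |Real.sin ((ε^2 - (2*ε)^2)/2)| * (2 * |Real.sin ((2*π - ε - π)/2)|)
        ≤ 6 * ε^2 := by
      nlinarith [mul_le_mul hB3u hB4 (abs_nonneg (Real.sin ((2*π - ε - π)/2)))
        (by positivity : (0:ℝ) ≤ 3*ε^2/2)]
    have h12 : 12 * (M * ε) < 1 := by nlinarith [mul_nonneg hM0 hε0.le]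
    have hkey : M * (6 * ε^2) < ε/2 := by nlinarith [mul_lt_mul_of_pos_right h12 hε0]
    have := mul_le_mul_of_nonneg_left hden hM0
    linarith
  exact lt_of_le_of_lt ((hη hpre_le).trans hM8) hpost
end

section
/- Let φ : [0, 2π] → ℝ be continuously differentiable with |φ'| ≤ M, and let θ : [0, 2π] → [0, 2π] be an increasing homeomorphism satisfying |θ(x) − θ(y)| ≥ α|x − y|^p for constants α > 0 and p < 2. Then the double integral ∫₀^{2π}∫₀^{2π} |cot((θ(x)−θ(y))/2)| · |φ(x) − φ(y)| dx dy is finite. -/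
/-!
For `x < y` write `d = θ y - θ x ∈ (0, 2π)`. Jordan's inequality gives
`|cot (d / 2)| ≤ π / d + π / (2π - d)`, and `φ` is `M`-Lipschitz. The Hölder bound
`d ≥ α (y - x) ^ p` turns the first term into `(π M / α) (y - x) ^ (1 - p)`. The second term is
singular only at the corner `(0, 2π)`, where `θ` fixes the endpoints, so
`2π - d = θ x + (2π - θ y) ≥ α (x ^ p + (2π - y) ^ p) ≥ 2 α x ^ (p / 2) (2π - y) ^ (p / 2)`,
a product of one-variable powers. Since `p < 2`, every exponent exceeds `-1` and the resulting
majorant is integrable on the square.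
-/

open MeasureTheory Real Set

theorem Real.cot_neg (x : ℝ) : cot (-x) = -cot x := by
  simp only [cot_eq_cos_div_sin, cos_neg, sin_neg, div_neg]

theorem Real.measurable_cot : Measurable cot := by
  rw [show cot = cos / sin from funext cot_eq_cos_div_sin]
  exact measurable_cos.div measurable_sin

theorem Real.abs_cot_half_le {d : ℝ} (h0 : 0 < d) (h2π : d < 2 * π) :
    |cot (d / 2)| ≤ π / d + π / (2 * π - d) := by
  have hsin : 0 < sin (d / 2) := sin_pos_of_pos_of_lt_pi (by linarith) (by linarith)
  have hcot : |cot (d / 2)| ≤ 1 / sin (d / 2) := by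
    rw [cot_eq_cos_div_sin, abs_div, abs_of_pos hsin]
    gcongr
    exact abs_cos_le_one _
  have hπd : 0 < π / d := div_pos pi_pos h0
  have hπd' : 0 < π / (2 * π - d) := div_pos pi_pos (by linarith)
  -- Jordan's inequality on whichever of `d / 2`, `π - d / 2` lies in `[0, π / 2]`
  rcases le_total d π with h | h
  · have hJ := mul_le_sin (x := d / 2) (by linarith) (by linarith)
    calc |cot (d / 2)| ≤ 1 / sin (d / 2) := hcot
      _ ≤ π / d := by
        rw [div_le_div_iff₀ hsin h0]
        field_simp at hJ
        linarith
      _ ≤ _ := le_add_of_nonneg_right hπd'.le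
  · have hJ := mul_le_sin (x := π - d / 2) (by linarith) (by linarith)
    rw [sin_pi_sub] at hJ
    calc |cot (d / 2)| ≤ 1 / sin (d / 2) := hcot
      _ ≤ π / (2 * π - d) := by
        rw [div_le_div_iff₀ hsin (by linarith)]
        field_simp at hJ
        linarith
      _ ≤ _ := le_add_of_nonneg_left hπd.le

theorem MonotoneOn.apply_eq_self_of_surjOn_Icc {f : ℝ → ℝ} {a b : ℝ} (hab : a ≤ b)
    (hf : MonotoneOn f (Icc a b)) (hmaps : MapsTo f (Icc a b) (Icc a b))
    (hsurj : SurjOn f (Icc a b) (Icc a b)) : f a = a ∧ f b = b := by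
  have ha : a ∈ Icc a b := left_mem_Icc.2 hab
  have hb : b ∈ Icc a b := right_mem_Icc.2 hab
  obtain ⟨za, hza, hfza⟩ := hsurj ha
  obtain ⟨zb, hzb, hfzb⟩ := hsurj hb
  have := hf ha hza hza.1
  have := hf hzb hb hzb.2
  constructor <;> linarith [(hmaps ha).1, (hmaps hb).2]

theorem abs_sub_le_of_abs_deriv_le {f : ℝ → ℝ} {a b M : ℝ}
    (hf : DifferentiableOn ℝ f (Ioo a b)) (hf' : ∀ x ∈ Ioo a b, |deriv f x| ≤ M)
    {x y : ℝ} (hx : x ∈ Ioo a b) (hy : y ∈ Ioo a b) : |f x - f y| ≤ M * |x - y| :=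
  (convex_Ioo a b).norm_image_sub_le_of_norm_deriv_le
    (fun _ hz => hf.differentiableAt (isOpen_Ioo.mem_nhds hz)) hf' hy hx

theorem intervalIntegrable_abs_rpow {e : ℝ} (he : -1 < e) (a b : ℝ) :
    IntervalIntegrable (fun t : ℝ => |t| ^ e) volume a b :=
  intervalIntegrable_of_even (fun t => by rw [abs_neg]) fun _ hx =>
    (intervalIntegral.intervalIntegrable_rpow' he).congr fun t ht => by
      rw [uIoc_of_le hx.le] at ht
      rw [abs_of_pos ht.1]

theorem IntegrableOn.mul_prod {X Y : Type*} [MeasurableSpace X] [MeasurableSpace Y]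
    {μ : Measure X} {ν : Measure Y} [SFinite μ] [SFinite ν] {f : X → ℝ} {g : Y → ℝ}
    {s : Set X} {t : Set Y}
    (hf : IntegrableOn f s μ) (hg : IntegrableOn g t ν) :
    IntegrableOn (fun q : X × Y => f q.1 * g q.2) (s ×ˢ t) (μ.prod ν) := by
  rw [IntegrableOn, ← Measure.prod_restrict]
  exact Integrable.mul_prod hf hg

theorem ContinuousOn.comp_fst_sub_comp_snd {f : ℝ → ℝ} {s : Set ℝ} (hf : ContinuousOn f s) :
    ContinuousOn (fun q : ℝ × ℝ => f q.1 - f q.2) (s ×ˢ s) :=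
  (hf.comp continuousOn_fst fun _ hq => hq.1).sub (hf.comp continuousOn_snd fun _ hq => hq.2)

theorem integrableOn_abs_sub_rpow {e : ℝ} (he : -1 < e) (a b : ℝ) :
    IntegrableOn (fun q : ℝ × ℝ => |q.1 - q.2| ^ e) (Icc a b ×ˢ Icc a b) := by
  -- the integrand is dominated by the convolution integrand `1_{[a,b]}(y) g(x - y)`
  set R := b - a
  set g := (Icc (-R) R).indicator fun t : ℝ => |t| ^ e
  have hg : Integrable g := by
    rw [integrable_indicator_iff measurableSet_Icc]
    exact ((intervalIntegrable_iff').1 (intervalIntegrable_abs_rpow he (-R) R)).mono_set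
      Icc_subset_uIcc
  have h1 : Integrable ((Icc a b).indicator fun _ : ℝ => (1 : ℝ)) :=
    (integrable_indicator_iff measurableSet_Icc).2 (integrableOn_const measure_Icc_lt_top.ne)
  have hconv := h1.convolution_integrand (ContinuousLinearMap.mul ℝ ℝ) hg
  rw [← Measure.volume_eq_prod] at hconv
  refine hconv.integrableOn.mono'
    ((measurable_fst.sub measurable_snd).abs.pow_const e).aestronglyMeasurable ?_
  filter_upwards [ae_restrict_mem (measurableSet_Icc.prod measurableSet_Icc)] with q hq
  have hqR : q.1 - q.2 ∈ Icc (-R) R := by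
    constructor <;> linarith [hq.1.1, hq.1.2, hq.2.1, hq.2.2]
  simp [g, indicator_of_mem hq.2, indicator_of_mem hqR, abs_of_nonneg, rpow_nonneg]

theorem two_mul_rpow_half_mul_le {a b : ℝ} (ha : 0 ≤ a) (hb : 0 ≤ b) (p : ℝ) :
    2 * (a ^ (p / 2) * b ^ (p / 2)) ≤ a ^ p + b ^ p := by
  have hsq : ∀ c : ℝ, 0 ≤ c → (c ^ (p / 2)) ^ 2 = c ^ p := fun c hc => by
    rw [← rpow_mul_natCast hc]; norm_num
  rw [← hsq a ha, ← hsq b hb, ← mul_assoc]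
  exact two_mul_le_add_sq _ _

/-- Majorant of `|cot ((θ x - θ y) / 2)| * |x - y|`: the diagonal singularity and the two corner
singularities at `(0, 2π)` and `(2π, 0)`, where `θ x - θ y = ∓ 2π`. -/
noncomputable def variationMajorant (p : ℝ) (q : ℝ × ℝ) : ℝ :=
  |q.1 - q.2| ^ (1 - p) + π * (q.1 ^ (-(p / 2)) * (2 * π - q.2) ^ (-(p / 2)) +
    (2 * π - q.1) ^ (-(p / 2)) * q.2 ^ (-(p / 2)))

theorem variationMajorant_swap (p : ℝ) (q : ℝ × ℝ) :
    variationMajorant p q.swap = variationMajorant p q := by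
  simp only [variationMajorant, Prod.fst_swap, Prod.snd_swap, abs_sub_comm q.2 q.1]
  ring

theorem variationMajorant_nonneg {p : ℝ} {q : ℝ × ℝ} (hq : q ∈ Ioo 0 (2 * π) ×ˢ Ioo 0 (2 * π)) :
    0 ≤ variationMajorant p q := by
  obtain ⟨⟨hx0, hx⟩, hy0, hy⟩ := hq
  have : 0 ≤ 2 * π - q.1 := by linarith
  have : 0 ≤ 2 * π - q.2 := by linarith
  unfold variationMajorant
  positivity

theorem integrableOn_variationMajorant {p : ℝ} (hp : p < 2) :
    IntegrableOn (variationMajorant p) (Icc 0 (2 * π) ×ˢ Icc 0 (2 * π)) := by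
  have he : -1 < -(p / 2) := by linarith
  have hpow : IntegrableOn (fun x : ℝ => x ^ (-(p / 2))) (Icc 0 (2 * π)) :=
    (intervalIntegrable_iff_integrableOn_Icc_of_le two_pi_pos.le).1
      (intervalIntegral.intervalIntegrable_rpow' he)
  have hpow' : IntegrableOn (fun x : ℝ => (2 * π - x) ^ (-(p / 2))) (Icc 0 (2 * π)) := by
    have := (intervalIntegral.intervalIntegrable_rpow' he (a := 0) (b := 2 * π)).comp_sub_left
      (2 * π)
    rw [sub_zero, sub_self, IntervalIntegrable.symm_iff] at this
    exact (intervalIntegrable_iff_integrableOn_Icc_of_le two_pi_pos.le).1 this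
  exact (integrableOn_abs_sub_rpow (by linarith) _ _).add
    (((IntegrableOn.mul_prod hpow hpow').add (IntegrableOn.mul_prod hpow' hpow)).const_mul π)

section

variable {θ : ℝ → ℝ} {α p : ℝ}

theorem two_mul_mul_rpow_half_le_two_pi_sub (hθ0 : θ 0 = 0) (hθ2π : θ (2 * π) = 2 * π)
    (hθ : MonotoneOn θ (Icc 0 (2 * π))) (hα : 0 ≤ α)
    (hθhold : ∀ x ∈ Icc 0 (2 * π), ∀ y ∈ Icc 0 (2 * π), α * |x - y| ^ p ≤ |θ x - θ y|)
    {x y : ℝ} (hx : x ∈ Icc 0 (2 * π)) (hy : y ∈ Icc 0 (2 * π)) :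
    α * (2 * (x ^ (p / 2) * (2 * π - y) ^ (p / 2))) ≤ 2 * π - (θ y - θ x) := by
  have h0I : 0 ∈ Icc 0 (2 * π) := left_mem_Icc.2 two_pi_pos.le
  have h2πI : 2 * π ∈ Icc 0 (2 * π) := right_mem_Icc.2 two_pi_pos.le
  have hθx : 0 ≤ θ x := hθ0 ▸ hθ h0I hx hx.1
  have hθy : θ y ≤ 2 * π := hθ2π ▸ hθ hy h2πI hy.2
  have hy' : 0 ≤ 2 * π - y := sub_nonneg.2 hy.2
  have h1 := hθhold x hx 0 h0I
  have h2 := hθhold (2 * π) h2πI y hy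
  rw [hθ0, sub_zero, sub_zero, abs_of_nonneg hx.1, abs_of_nonneg hθx] at h1
  rw [hθ2π, abs_of_nonneg hy', abs_of_nonneg (sub_nonneg.2 hθy)] at h2
  have := mul_le_mul_of_nonneg_left (two_mul_rpow_half_mul_le hx.1 hy' p) hα
  linarith

theorem abs_cot_mul_sub_le_of_lt (hθ0 : θ 0 = 0) (hθ2π : θ (2 * π) = 2 * π)
    (hθ : StrictMonoOn θ (Icc 0 (2 * π))) (hα : 0 < α)
    (hθhold : ∀ x ∈ Icc 0 (2 * π), ∀ y ∈ Icc 0 (2 * π), α * |x - y| ^ p ≤ |θ x - θ y|)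
    {x y : ℝ} (hx : x ∈ Ioo 0 (2 * π)) (hy : y ∈ Ioo 0 (2 * π)) (hxy : x < y) :
    |cot ((θ y - θ x) / 2)| * (y - x) ≤ π / α * variationMajorant p (x, y) := by
  obtain ⟨hx0, hx2π⟩ := hx
  obtain ⟨hy0, hy2π⟩ := hy
  have hxI : x ∈ Icc 0 (2 * π) := ⟨hx0.le, hx2π.le⟩
  have hyI : y ∈ Icc 0 (2 * π) := ⟨hy0.le, hy2π.le⟩
  have hyx : 0 < y - x := sub_pos.2 hxy
  have hy' : 0 < 2 * π - y := sub_pos.2 hy2π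
  have hd : 0 < θ y - θ x := sub_pos.2 (hθ hxI hyI hxy)
  have hhold : α * (y - x) ^ p ≤ θ y - θ x := by
    simpa [abs_of_pos hyx, abs_of_pos hd] using hθhold y hyI x hxI
  set d := θ y - θ x
  set u := x ^ (p / 2) * (2 * π - y) ^ (p / 2)
  have hu : 0 < u := by positivity
  have hcorner : α * (2 * u) ≤ 2 * π - d :=
    two_mul_mul_rpow_half_le_two_pi_sub hθ0 hθ2π hθ.monotoneOn hα.le hθhold hxI hyI
  have hd' : 0 < 2 * π - d := by nlinarith
  have hdiag : π / d * (y - x) ≤ π / α * |x - y| ^ (1 - p) := by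
    rw [abs_sub_comm, abs_of_pos hyx, rpow_sub hyx, rpow_one]
    calc π / d * (y - x) = π * (y - x) / d := by ring
      _ ≤ π * (y - x) / (α * (y - x) ^ p) := by gcongr
      _ = π / α * ((y - x) / (y - x) ^ p) := by ring
  have hcorner' : π / (2 * π - d) * (y - x) ≤
      π / α * (π * (x ^ (-(p / 2)) * (2 * π - y) ^ (-(p / 2)))) := by
    rw [rpow_neg hx0.le, rpow_neg hy'.le, ← mul_inv]
    calc π / (2 * π - d) * (y - x) ≤ π * (2 * π) / (2 * π - d) := by
          rw [div_mul_eq_mul_div]; gcongr; linarith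
      _ ≤ π * (2 * π) / (α * (2 * u)) := by gcongr
      _ = π / α * (π * u⁻¹) := by field_simp
  have hrest : 0 ≤ π / α * (π * ((2 * π - x) ^ (-(p / 2)) * y ^ (-(p / 2)))) := by positivity
  calc |cot (d / 2)| * (y - x) ≤ (π / d + π / (2 * π - d)) * (y - x) := by
        gcongr
        exact abs_cot_half_le hd (by linarith)
    _ ≤ π / α * |x - y| ^ (1 - p) +
          π / α * (π * (x ^ (-(p / 2)) * (2 * π - y) ^ (-(p / 2)))) := by
        rw [add_mul]; exact add_le_add hdiag hcorner'
    _ ≤ π / α * variationMajorant p (x, y) := by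
        unfold variationMajorant
        linarith

theorem abs_cot_mul_abs_sub_le (hθ0 : θ 0 = 0) (hθ2π : θ (2 * π) = 2 * π)
    (hθ : StrictMonoOn θ (Icc 0 (2 * π))) (hα : 0 < α)
    (hθhold : ∀ x ∈ Icc 0 (2 * π), ∀ y ∈ Icc 0 (2 * π), α * |x - y| ^ p ≤ |θ x - θ y|)
    {x y : ℝ} (hx : x ∈ Ioo 0 (2 * π)) (hy : y ∈ Ioo 0 (2 * π)) :
    |cot ((θ x - θ y) / 2)| * |x - y| ≤ π / α * variationMajorant p (x, y) := by
  rcases lt_trichotomy x y with hxy | rfl | hxy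
  · rw [abs_sub_comm, abs_of_pos (sub_pos.2 hxy), ← abs_neg, ← cot_neg, ← neg_div, neg_sub]
    exact abs_cot_mul_sub_le_of_lt hθ0 hθ2π hθ hα hθhold hx hy hxy
  · simp only [sub_self, abs_zero, mul_zero]
    exact mul_nonneg (div_pos pi_pos hα).le (variationMajorant_nonneg ⟨hx, hx⟩)
  · rw [abs_of_pos (sub_pos.2 hxy), ← variationMajorant_swap]
    exact abs_cot_mul_sub_le_of_lt hθ0 hθ2π hθ hα hθhold hy hx hxy

end

theorem variation_integral_finite (φ θ : ℝ → ℝ) (M α p : ℝ)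
    (hφ : ContDiffOn ℝ 1 φ (Set.Icc 0 (2 * π)))
    (hφ' : ∀ x ∈ Set.Icc 0 (2 * π), |deriv φ x| ≤ M)
    (hθmono : StrictMonoOn θ (Set.Icc 0 (2 * π)))
    (hθcont : ContinuousOn θ (Set.Icc 0 (2 * π)))
    (hθsurj : Set.MapsTo θ (Set.Icc 0 (2 * π)) (Set.Icc 0 (2 * π)) ∧
      Set.SurjOn θ (Set.Icc 0 (2 * π)) (Set.Icc 0 (2 * π)))
    (hα : 0 < α) (hp : p < 2)
    (hθhold : ∀ x ∈ Set.Icc 0 (2 * π), ∀ y ∈ Set.Icc 0 (2 * π),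
      α * |x - y| ^ p ≤ |θ x - θ y|) :
    IntegrableOn
      (fun q : ℝ × ℝ => |Real.cot ((θ q.1 - θ q.2) / 2)| * |φ q.1 - φ q.2|)
      (Set.Icc 0 (2 * π) ×ˢ Set.Icc 0 (2 * π)) volume := by
  obtain ⟨hθ0, hθ2π⟩ :=
    hθmono.monotoneOn.apply_eq_self_of_surjOn_Icc two_pi_pos.le hθsurj.1 hθsurj.2
  have hM : 0 ≤ M := (abs_nonneg _).trans (hφ' 0 (left_mem_Icc.2 two_pi_pos.le))
  have hsquare : MeasurableSet (Icc 0 (2 * π) ×ˢ Icc 0 (2 * π) : Set (ℝ × ℝ)) :=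
    measurableSet_Icc.prod measurableSet_Icc
  refine ((integrableOn_variationMajorant hp).const_mul (M * (π / α))).mono' ?_ ?_
  · have hθdiff := hθcont.comp_fst_sub_comp_snd.aemeasurable (μ := volume) hsquare
    have hφdiff := hφ.continuousOn.comp_fst_sub_comp_snd.aemeasurable (μ := volume) hsquare
    exact ((measurable_cot.comp_aemeasurable (hθdiff.div_const 2)).abs.mul
      hφdiff.abs).aestronglyMeasurable
  · have hopen : Ioo 0 (2 * π) ×ˢ Ioo 0 (2 * π) =ᵐ[volume]
        Icc 0 (2 * π) ×ˢ Icc (0 : ℝ) (2 * π) := by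
      rw [Measure.volume_eq_prod]; exact Measure.set_prod_ae_eq Ioo_ae_eq_Icc Ioo_ae_eq_Icc
    rw [← Measure.restrict_congr_set hopen]
    filter_upwards [ae_restrict_mem (measurableSet_Ioo.prod measurableSet_Ioo)] with q ⟨hx, hy⟩
    have hlip := abs_sub_le_of_abs_deriv_le
      ((hφ.differentiableOn one_ne_zero).mono Ioo_subset_Icc_self)
      (fun x hx => hφ' x (Ioo_subset_Icc_self hx)) hx hy
    rw [Real.norm_eq_abs, abs_mul, abs_abs, abs_abs]
    calc |cot ((θ q.1 - θ q.2) / 2)| * |φ q.1 - φ q.2|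
        ≤ |cot ((θ q.1 - θ q.2) / 2)| * (M * |q.1 - q.2|) := by gcongr
      _ = M * (|cot ((θ q.1 - θ q.2) / 2)| * |q.1 - q.2|) := by ring
      _ ≤ M * (π / α * variationMajorant p q) :=
        mul_le_mul_of_nonneg_left (abs_cot_mul_abs_sub_le hθ0 hθ2π hθmono hα hθhold hx hy) hM
      _ = _ := by ring
end
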